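/- arXiv:0902.0422 — 2 statements merged into one kernel-verified Lean document; each statement's English description precedes it below -/
import Mathlib

section
/- Let Γ be a linearly ordered abelian group, A a subset of Γ, and {γ_ρ} a strictly increasing sequence in A indexed by a nonempty well-ordered set without largest element. Let f₁,…,fₙ : A → Γ be functions such that for all distinct i, j ∈ {1,…,n} the function f_i − f_j is either strictly increasing or strictly decreasing. Then there is a unique enumeration i₁,…,iₙ of {1,…,n} such that f_{i₁}(γ_ρ) < f_{i₂}(γ_ρ) < … < f_{iₙ}(γ_ρ) eventually (i.e. for all sufficiently large ρ). Moreover, for this enumeration and any δ ∈ Γ such that the set {γ ∈ Γ : 0 < γ < δ} is finite, if 1 ≤ μ < ν ≤ n then f_{i_ν}(γ_ρ) − f_{i_μ}(γ_ρ) > δ eventually. -/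
/-!
For distinct `i, j` the difference `f i (γ_ρ) - f j (γ_ρ)` is strictly monotone in `ρ`, so it
has eventually constant sign; hence the values `f i (γ_ρ)` are eventually ordered in a fixed
way, which is read off by sorting them at a single late index. A strictly monotone difference
takes each value at most once, so it eventually leaves the finite set `(0, δ]`.
-/

open Filter

section EventualSign

variable {I Γ : Type*} [LinearOrder I] [NoMaxOrder I] [LinearOrder Γ]

theorem StrictMono.eventually_lt_or_eventually_gt {s : I → Γ} (hs : StrictMono s) (a : Γ) :
    (∀ᶠ ρ in atTop, s ρ < a) ∨ ∀ᶠ ρ in atTop, a < s ρ := by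
  by_cases h : ∃ ρ, a ≤ s ρ
  · obtain ⟨ρ, hρ⟩ := h
    exact Or.inr <| (eventually_gt_atTop ρ).mono fun _ h' => hρ.trans_lt (hs h')
  · simp only [not_exists, not_le] at h
    exact Or.inl <| Eventually.of_forall h

theorem StrictAnti.eventually_lt_or_eventually_gt {s : I → Γ} (hs : StrictAnti s) (a : Γ) :
    (∀ᶠ ρ in atTop, s ρ < a) ∨ ∀ᶠ ρ in atTop, a < s ρ :=
  (hs.dual_right.eventually_lt_or_eventually_gt (OrderDual.toDual a)).symm

theorem eventually_lt_or_eventually_gt_of_strictMono_sub {G : Type*} [AddCommGroup G]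
    [LinearOrder G] [IsOrderedAddMonoid G] {s t : I → G}
    (h : StrictMono (s - t) ∨ StrictAnti (s - t)) :
    (∀ᶠ ρ in atTop, s ρ < t ρ) ∨ ∀ᶠ ρ in atTop, t ρ < s ρ := by
  have key := h.elim (·.eventually_lt_or_eventually_gt 0) (·.eventually_lt_or_eventually_gt 0)
  simpa only [Pi.sub_apply, sub_neg, sub_pos] using key

end EventualSign

theorem Filter.Tendsto.eventually_gt_of_finite_Ioo {α Γ : Type*} [LinearOrder Γ]
    {l : Filter α} {s : α → Γ} (hs : Tendsto s l cofinite) {a b : Γ}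
    (ha : ∀ᶠ x in l, a < s x) (hab : (Set.Ioo a b).Finite) : ∀ᶠ x in l, b < s x := by
  have hIoc : (Set.Ioc a b).Finite :=
    (hab.insert b).subset fun x hx => (eq_or_lt_of_le hx.2).imp id fun h => ⟨hx.1, h⟩
  filter_upwards [ha, hs.eventually hIoc.eventually_cofinite_notMem] with x hax hx
  exact lt_of_not_ge fun hxb => hx ⟨hax, hxb⟩

theorem Tuple.eq_sort_of_strictMono_comp {α : Type*} [LinearOrder α] {n : ℕ}
    {g : Fin n → α} {e : Equiv.Perm (Fin n)} (h : StrictMono (g ∘ e)) : e = Tuple.sort g :=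
  Tuple.eq_sort_iff.2 ⟨h.monotone, fun _ _ hij heq => absurd heq (h hij).ne⟩

theorem exists_perm_eventually_strictMono_comp {α Γ : Type*} [LinearOrder Γ] {l : Filter α}
    [l.NeBot] {n : ℕ} (v : α → Fin n → Γ)
    (hv : ∀ i j, i ≠ j → (∀ᶠ x in l, v x i < v x j) ∨ ∀ᶠ x in l, v x j < v x i) :
    ∃ e : Equiv.Perm (Fin n), ∀ᶠ x in l, StrictMono (v x ∘ e) := by
  have hlate : ∀ᶠ x in l, ∀ i j, (∀ᶠ y in l, v y i < v y j) → v x i < v x j :=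
    eventually_all.2 fun _ => eventually_all.2 fun _ => eventually_imp_distrib_left.2 id
  obtain ⟨x₀, hx₀⟩ := hlate.exists
  refine ⟨Tuple.sort (v x₀), hlate.mono fun x hx μ ν hμν => hx _ _ ?_⟩
  have hne : Tuple.sort (v x₀) μ ≠ Tuple.sort (v x₀) ν := (Equiv.injective _).ne hμν.ne
  refine (hv _ _ hne).resolve_right fun hgt => ?_
  exact (hx₀ _ _ hgt).not_ge (Tuple.monotone_sort (v x₀) hμν.le)

theorem stmt0_general {Γ : Type*} [AddCommGroup Γ] [LinearOrder Γ] [IsOrderedAddMonoid Γ] (A : Set Γ)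
    {I : Type*} [LinearOrder I] [Nonempty I] [NoMaxOrder I]
    (γseq : I → A) (hγ : StrictMono fun ρ => (γseq ρ : Γ))
    (n : ℕ) (f : Fin n → A → Γ)
    (hf : ∀ i j : Fin n, i ≠ j →
      StrictMono (fun x : A => f i x - f j x) ∨
      StrictAnti (fun x : A => f i x - f j x)) :
    ∃ e : Equiv.Perm (Fin n),
      (∃ ρ₀ : I, ∀ ρ : I, ρ₀ ≤ ρ → ∀ μ ν : Fin n, μ < ν →
        f (e μ) (γseq ρ) < f (e ν) (γseq ρ)) ∧
      (∀ e' : Equiv.Perm (Fin n),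
        (∃ ρ₀ : I, ∀ ρ : I, ρ₀ ≤ ρ → ∀ μ ν : Fin n, μ < ν →
          f (e' μ) (γseq ρ) < f (e' ν) (γseq ρ)) → e' = e) ∧
      (∀ δ : Γ, {x : Γ | 0 < x ∧ x < δ}.Finite →
        ∀ μ ν : Fin n, μ < ν →
          ∃ ρ₀ : I, ∀ ρ : I, ρ₀ ≤ ρ →
            δ < f (e ν) (γseq ρ) - f (e μ) (γseq ρ)) := by
  set v : I → Fin n → Γ := fun ρ i => f i (γseq ρ)
  have hsub : ∀ i j, i ≠ j → StrictMono (fun ρ => v ρ i - v ρ j) ∨ StrictAnti (fun ρ => v ρ i - v ρ j) :=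
    fun i j hij => (hf i j hij).imp (·.comp fun _ _ h => hγ h) (·.comp_strictMono fun _ _ h => hγ h)
  obtain ⟨e, he⟩ := exists_perm_eventually_strictMono_comp v fun i j hij =>
    eventually_lt_or_eventually_gt_of_strictMono_sub (hsub i j hij)
  simp only [← eventually_atTop]
  refine ⟨e, he, fun e' he' => ?_, fun δ hδ μ ν hμν => ?_⟩
  · obtain ⟨ρ, hρe, hρe'⟩ := (he.and he').exists
    exact (Tuple.eq_sort_of_strictMono_comp (g := v ρ) hρe').trans
      (Tuple.eq_sort_of_strictMono_comp (g := v ρ) hρe).symm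
  · have hinj : Function.Injective fun ρ => v ρ (e ν) - v ρ (e μ) :=
      (hsub _ _ (e.injective.ne hμν.ne')).elim StrictMono.injective StrictAnti.injective
    exact (hinj.tendsto_cofinite.mono_left atTop_le_cofinite).eventually_gt_of_finite_Ioo
      (he.mono fun ρ hρ => sub_pos.2 (hρ hμν)) hδ

/-- Lemma 2.2 ("kapla"): given a strictly increasing well-indexed sequence
`{γ_ρ}` in `A ⊆ Γ` and functions `f₁,…,fₙ : A → Γ` whose pairwise differences
are strictly monotone, there is a unique enumeration making the values
eventually strictly ordered; moreover for that enumeration, if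
`{γ : 0 < γ < δ}` is finite then consecutive gaps eventually exceed `δ`. -/
theorem stmt0 {Γ : Type*} [AddCommGroup Γ] [LinearOrder Γ] [IsOrderedAddMonoid Γ] (A : Set Γ)
    {I : Type*} [LinearOrder I] [Nonempty I] [NoMaxOrder I] [WellFoundedLT I]
    (γseq : I → A) (hγ : StrictMono fun ρ => (γseq ρ : Γ))
    (n : ℕ) (f : Fin n → A → Γ)
    (hf : ∀ i j : Fin n, i ≠ j →
      StrictMono (fun x : A => f i x - f j x) ∨
      StrictAnti (fun x : A => f i x - f j x)) :
    ∃ e : Equiv.Perm (Fin n),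
      (∃ ρ₀ : I, ∀ ρ : I, ρ₀ ≤ ρ → ∀ μ ν : Fin n, μ < ν →
        f (e μ) (γseq ρ) < f (e ν) (γseq ρ)) ∧
      (∀ e' : Equiv.Perm (Fin n),
        (∃ ρ₀ : I, ∀ ρ : I, ρ₀ ≤ ρ → ∀ μ ν : Fin n, μ < ν →
          f (e' μ) (γseq ρ) < f (e' ν) (γseq ρ)) → e' = e) ∧
      (∀ δ : Γ, {x : Γ | 0 < x ∧ x < δ}.Finite →
        ∀ μ ν : Fin n, μ < ν →
          ∃ ρ₀ : I, ∀ ρ : I, ρ₀ ≤ ρ →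
            δ < f (e ν) (γseq ρ) - f (e μ) (γseq ρ)) :=
  stmt0_general A γseq hγ n f hf
end

section
/- Let K and K' be valued difference fields with a common valued difference subfield E, with Γ_E := v(E^×) and residue field k_E of E. Let a ∈ O_K be such that α := ā is σ̄-transcendental over k_E. Then: (i) for every σ-polynomial P(x) = Σ_l b_l · x^{l₀}σ(x)^{l₁}⋯σ^n(x)^{lₙ} over E one has v(P(a)) = min_l v(b_l); (ii) v(E⟨a⟩^×) = v(E^×) = Γ_E, and E⟨a⟩ has residue field k_E⟨α⟩; (iii) if b ∈ O_{K'} is such that β := b̄ is σ̄-transcendental over k_E, then there is a valued difference field isomorphism E⟨a⟩ → E⟨b⟩ over E sending a to b. -/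
/-!
Common definitions: three-sorted valued (difference) fields, σ-polynomials,
pc-sequences, axioms from the paper.
-/

namespace VDFPaper

universe u v w

/-- A valued field, presented as a three-sorted structure `(K, Γ, k; v, π)`.
The valuation is extended to `v : K → WithTop Γ` with `v 0 = ⊤`, and the residue
map `π : O → k` is extended to all of `K` by `0` outside the valuation ring. -/
structure ValuedField (K : Type u) (Γ : Type v) (k : Type w)
    [Field K] [AddCommGroup Γ] [LinearOrder Γ] [IsOrderedAddMonoid Γ] [Field k] where
  v : K → WithTop Γ
  π : K → k
  v_top_iff : ∀ a : K, v a = ⊤ ↔ a = 0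
  v_mul : ∀ a b : K, v (a * b) = v a + v b
  v_add : ∀ a b : K, min (v a) (v b) ≤ v (a + b)
  v_surj : ∀ γ : Γ, ∃ a : K, v a = (γ : WithTop Γ)
  π_add : ∀ a b : K, 0 ≤ v a → 0 ≤ v b → π (a + b) = π a + π b
  π_mul : ∀ a b : K, 0 ≤ v a → 0 ≤ v b → π (a * b) = π a * π b
  π_one : π 1 = 1
  π_surj : Function.Surjective π
  π_eq_zero_iff : ∀ a : K, 0 ≤ v a → (π a = 0 ↔ 0 < v a)
  π_junk : ∀ a : K, ¬ 0 ≤ v a → π a = 0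

/-- A valued difference field (satisfying Axiom 1: `v (σ a) = v a`);
`σr` is the induced automorphism of the residue field. -/
structure ValuedDiffField (K : Type u) (Γ : Type v) (k : Type w)
    [Field K] [AddCommGroup Γ] [LinearOrder Γ] [IsOrderedAddMonoid Γ] [Field k]
    extends ValuedField K Γ k where
  σ : K ≃+* K
  σr : k ≃+* k
  v_σ : ∀ a : K, v (σ a) = v a
  π_σ : ∀ a : K, π (σ a) = σr (π a)

/-- `iterEquiv s m` is the `m`-th iterate (`m : ℤ`) of the automorphism `s`. -/
def iterEquiv {R : Type*} [Mul R] [Add R] (s : R ≃+* R) : ℤ → R → R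
  | Int.ofNat m => (⇑s)^[m]
  | Int.negSucc m => (⇑s.symm)^[m + 1]

/-- Evaluation of the σ-polynomial `f(x, σ x, …, σⁿ x)` at `a`. -/
noncomputable def evalDiff {R : Type*} [CommSemiring R] (s : R → R) {n : ℕ}
    (f : MvPolynomial (Fin (n + 1)) R) (a : R) : R :=
  MvPolynomial.eval (fun i : Fin (n + 1) => s^[(i : ℕ)] a) f

/-- The Taylor coefficient `f_(i)` (Hasse derivative), characterized by
`f(x+y) = Σ_i f_(i)(x) · y^i`. -/
noncomputable def taylorCoeff {R : Type*} [CommRing R] {n : ℕ}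
    (i : Fin (n + 1) →₀ ℕ) (f : MvPolynomial (Fin (n + 1)) R) :
    MvPolynomial (Fin (n + 1)) R :=
  ∑ d ∈ f.support,
    MvPolynomial.monomial (d - i)
      ((∏ j ∈ d.support ∪ i.support, ((d j).choose (i j) : R)) * f.coeff d)

/-- Apply a (not necessarily ring-hom) map to all coefficients; used for
reduction of σ-polynomials over the valuation ring to the residue field. -/
noncomputable def mapCoeffs {R S : Type*} [CommSemiring R] [CommSemiring S]
    (π : R → S) {n : ℕ} (f : MvPolynomial (Fin (n + 1)) R) :
    MvPolynomial (Fin (n + 1)) S :=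
  ∑ d ∈ f.support, MvPolynomial.monomial d (π (f.coeff d))

/-- `|j| = j₀ + ⋯ + jₙ` for a multi-index. -/
def degSum {n : ℕ} (j : Fin (n + 1) →₀ ℕ) : ℕ := j.sum fun _ e => e

/-- The order of a σ-polynomial: the largest `i` such that `σ^i x` occurs. -/
def sigmaOrder {R : Type*} [CommSemiring R] {n : ℕ}
    (f : MvPolynomial (Fin (n + 1)) R) : ℕ :=
  f.support.sup fun d => d.support.sup fun j => (j : ℕ)

lemma sigmaOrder_le {R : Type*} [CommSemiring R] {n : ℕ}
    (f : MvPolynomial (Fin (n + 1)) R) : sigmaOrder f ≤ n :=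
  Finset.sup_le fun d _ => Finset.sup_le fun j _ => Nat.lt_succ_iff.mp j.isLt

/-- Complexity of a σ-polynomial: `(order + 1, degree in σ^order x, total degree)`
for nonconstant ones, `(0,0,0)` for constants (so constants are of lower
complexity than all nonconstant σ-polynomials, as in the paper). -/
noncomputable def sigmaComplexity {R : Type*} [CommSemiring R] {n : ℕ}
    (f : MvPolynomial (Fin (n + 1)) R) : ℕ × ℕ × ℕ :=
  if f.totalDegree = 0 then (0, 0, 0)
  else (sigmaOrder f + 1,
    MvPolynomial.degreeOf (⟨sigmaOrder f, Nat.lt_succ_of_le (sigmaOrder_le f)⟩ : Fin (n + 1)) f,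
    f.totalDegree)

/-- Lexicographic order on complexities. -/
def TripleLT (a b : ℕ × ℕ × ℕ) : Prop :=
  a.1 < b.1 ∨ (a.1 = b.1 ∧ (a.2.1 < b.2.1 ∨ (a.2.1 = b.2.1 ∧ a.2.2 < b.2.2)))

/-- `α` is σ-transcendental over the difference subfield given by `φ : E →+* F`,
where `s` is the difference operator of `F`. -/
def SigmaTranscendentalOver {E F : Type*} [Field E] [Field F]
    (φ : E →+* F) (s : F → F) (α : F) : Prop :=
  ∀ (n : ℕ) (f : MvPolynomial (Fin (n + 1)) E), f ≠ 0 →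
    evalDiff s (MvPolynomial.map φ f) α ≠ 0

/-- `g` is a minimal σ-polynomial of `α` over the difference subfield `φ : E →+* F`. -/
def IsMinimalSigmaPolyOver {E F : Type*} [Field E] [Field F]
    (φ : E →+* F) (s : F → F) {n : ℕ} (g : MvPolynomial (Fin (n + 1)) E) (α : F) : Prop :=
  g ≠ 0 ∧ evalDiff s (MvPolynomial.map φ g) α = 0 ∧
    ∀ (m : ℕ) (h : MvPolynomial (Fin (m + 1)) E), h ≠ 0 →
      TripleLT (sigmaComplexity h) (sigmaComplexity g) →
      evalDiff s (MvPolynomial.map φ h) α ≠ 0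

/-- The difference subfield `E⟨a⟩` generated over `S = E` by `a`:
the subfield generated by `S` together with all `σ^m a`, `m : ℤ`. -/
def genDiffSubfield {F : Type*} [Field F] (s : F ≃+* F) (S : Set F) (a : F) : Subfield F :=
  Subfield.closure (S ∪ Set.range fun m : ℤ => iterEquiv s m a)

/-- An embedding of valued fields (three-sorted). -/
structure ValEmbedding {K₁ Γ₁ k₁ K₂ Γ₂ k₂ : Type*}
    [Field K₁] [AddCommGroup Γ₁] [LinearOrder Γ₁] [IsOrderedAddMonoid Γ₁] [Field k₁]
    [Field K₂] [AddCommGroup Γ₂] [LinearOrder Γ₂] [IsOrderedAddMonoid Γ₂] [Field k₂]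
    (M₁ : ValuedField K₁ Γ₁ k₁) (M₂ : ValuedField K₂ Γ₂ k₂) where
  toField : K₁ →+* K₂
  toGroup : Γ₁ → Γ₂
  toGroup_add : ∀ x y : Γ₁, toGroup (x + y) = toGroup x + toGroup y
  toGroup_mono : StrictMono toGroup
  comm_v : ∀ a : K₁, M₂.v (toField a) = WithTop.map toGroup (M₁.v a)
  toRes : k₁ →+* k₂
  comm_π : ∀ a : K₁, 0 ≤ M₁.v a → M₂.π (toField a) = toRes (M₁.π a)

/-- An embedding (extension) of valued difference fields. -/
structure VDFEmbedding {K₁ Γ₁ k₁ K₂ Γ₂ k₂ : Type*}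
    [Field K₁] [AddCommGroup Γ₁] [LinearOrder Γ₁] [IsOrderedAddMonoid Γ₁] [Field k₁]
    [Field K₂] [AddCommGroup Γ₂] [LinearOrder Γ₂] [IsOrderedAddMonoid Γ₂] [Field k₂]
    (M₁ : ValuedDiffField K₁ Γ₁ k₁) (M₂ : ValuedDiffField K₂ Γ₂ k₂)
    extends ValEmbedding M₁.toValuedField M₂.toValuedField where
  comm_σ : ∀ a : K₁, toField (M₁.σ a) = M₂.σ (toField a)

/-- An extension is immediate if it induces bijections on value groups and residue fields. -/
def ValEmbedding.IsImmediate {K₁ Γ₁ k₁ K₂ Γ₂ k₂ : Type*}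
    [Field K₁] [AddCommGroup Γ₁] [LinearOrder Γ₁] [IsOrderedAddMonoid Γ₁] [Field k₁]
    [Field K₂] [AddCommGroup Γ₂] [LinearOrder Γ₂] [IsOrderedAddMonoid Γ₂] [Field k₂]
    {M₁ : ValuedField K₁ Γ₁ k₁} {M₂ : ValuedField K₂ Γ₂ k₂}
    (E : ValEmbedding M₁ M₂) : Prop :=
  Function.Surjective E.toGroup ∧ Function.Surjective E.toRes

def VDFEmbedding.IsImmediate {K₁ Γ₁ k₁ K₂ Γ₂ k₂ : Type*}
    [Field K₁] [AddCommGroup Γ₁] [LinearOrder Γ₁] [IsOrderedAddMonoid Γ₁] [Field k₁]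
    [Field K₂] [AddCommGroup Γ₂] [LinearOrder Γ₂] [IsOrderedAddMonoid Γ₂] [Field k₂]
    {M₁ : ValuedDiffField K₁ Γ₁ k₁} {M₂ : ValuedDiffField K₂ Γ₂ k₂}
    (E : VDFEmbedding M₁ M₂) : Prop :=
  E.toValEmbedding.IsImmediate

section Pc

variable {K : Type u} {Γ : Type v} {k : Type w}
variable [Field K] [AddCommGroup Γ] [LinearOrder Γ] [IsOrderedAddMonoid Γ] [Field k]

/-- A pc-sequence (pseudo-Cauchy sequence). The index type is assumed to be a
nonempty well-ordered set without greatest element where this matters. -/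
def IsPcSeq {I : Type*} [LinearOrder I] (v : K → WithTop Γ) (a : I → K) : Prop :=
  ∃ ρ₀ : I, ∀ ρ ρ' ρ'' : I, ρ₀ ≤ ρ → ρ < ρ' → ρ' < ρ'' →
    v (a ρ' - a ρ) < v (a ρ'' - a ρ')

/-- `a_ρ ⤳ x` : the sequence `a` pseudoconverges to `x`, i.e. `v (x - a_ρ)` is
eventually strictly increasing. -/
def PseudoLim {I : Type*} [LinearOrder I] (v : K → WithTop Γ) (a : I → K) (x : K) : Prop :=
  ∃ ρ₀ : I, ∀ ρ ρ' : I, ρ₀ ≤ ρ → ρ < ρ' → v (x - a ρ) < v (x - a ρ')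

/-- Two pc-sequences are equivalent: they have the same pseudolimits in every
valued field extension. -/
def PcEquiv (M : ValuedField K Γ k) {I : Type*} [LinearOrder I] (a b : I → K) : Prop :=
  ∀ (K' : Type u) (Γ' : Type v) (k' : Type w)
    [Field K'] [AddCommGroup Γ'] [LinearOrder Γ'] [IsOrderedAddMonoid Γ'] [Field k']
    (M' : ValuedField K' Γ' k') (E : ValEmbedding M M') (x : K'),
    PseudoLim M'.v (fun ρ => E.toField (a ρ)) x ↔
    PseudoLim M'.v (fun ρ => E.toField (b ρ)) x

end Pc

section Axioms

variable {K : Type u} {Γ : Type v} {k : Type w}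
variable [Field K] [AddCommGroup Γ] [LinearOrder Γ] [IsOrderedAddMonoid Γ] [Field k]

/-- Axiom 2: every value is the value of an element of the fixed field. -/
def Axiom2 (M : ValuedDiffField K Γ k) : Prop :=
  ∀ γ : Γ, ∃ a : K, M.σ a = a ∧ M.v a = (γ : WithTop Γ)

/-- Axiom 3 (a scheme about the residue difference field). -/
def Axiom3 (M : ValuedDiffField K Γ k) : Prop :=
  (∀ d : ℕ, 0 < d → ∃ y : k, (⇑M.σr)^[d] y ≠ y) ∧
  (∀ p : ℕ, p.Prime → ringChar k = p →
    ∀ d : ℤ, d ≠ 0 → ∀ e : ℕ, 0 < e → ∃ y : k, iterEquiv M.σr d y ≠ y ^ p ^ e)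

/-- Axiom 4ₙ: solvability in the residue field of inhomogeneous linear
σ̄-equations of order ≤ n. -/
def Axiom4n (M : ValuedDiffField K Γ k) (n : ℕ) : Prop :=
  ∀ α : Fin (n + 1) → k, (∃ i, α i ≠ 0) →
    ∃ y : k, 1 + ∑ i : Fin (n + 1), α i * (⇑M.σr)^[(i : ℕ)] y = 0

def Axiom4 (M : ValuedDiffField K Γ k) : Prop := ∀ n : ℕ, Axiom4n M n

/-- The Witt case for the prime `p`. -/
def WittCase (M : ValuedDiffField K Γ k) (p : ℕ) : Prop :=
  p.Prime ∧ ringChar K = 0 ∧ ringChar k = p ∧ PerfectField k ∧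
  (∃ e : Γ, 0 < e ∧ (∀ γ : Γ, 0 < γ → e ≤ γ) ∧ M.v (p : K) = (e : WithTop Γ)) ∧
  ∀ y : k, M.σr y = y ^ p

/-- Finitely ramified valued (difference) field. -/
def FinitelyRamified (M : ValuedDiffField K Γ k) : Prop :=
  ringChar K = 0 ∧ ∀ p : ℕ, p.Prime → ringChar k = p →
    {γ : Γ | 0 < γ ∧ (γ : WithTop Γ) < M.v (p : K)}.Finite

/-- Workable: Axioms 2 and 3, or Axiom 2 and a Witt case with infinite residue field. -/
def Workable (M : ValuedDiffField K Γ k) : Prop :=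
  (Axiom2 M ∧ Axiom3 M) ∨ (Axiom2 M ∧ ∃ p : ℕ, WittCase M p ∧ Infinite k)

/-- All coefficients lie in the valuation ring. -/
def CoeffsInO (M : ValuedField K Γ k) {n : ℕ} (f : MvPolynomial (Fin (n + 1)) K) : Prop :=
  ∀ d : Fin (n + 1) →₀ ℕ, 0 ≤ M.v (f.coeff d)

/-- `min_{|i| = 1} v (G_(i) (a))`. -/
noncomputable def vG1min (M : ValuedDiffField K Γ k) {n : ℕ}
    (f : MvPolynomial (Fin (n + 1)) K) (a : K) : WithTop Γ :=
  Finset.univ.inf fun i : Fin (n + 1) =>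
    M.v (evalDiff (⇑M.σ) (taylorCoeff (Finsupp.single i 1) f) a)

/-- `G` is σ-henselian at `a` (with `G` over `O` and `a ∈ O`). -/
def SigmaHenselAt (M : ValuedDiffField K Γ k) {n : ℕ}
    (f : MvPolynomial (Fin (n + 1)) K) (a : K) : Prop :=
  0 < M.v (evalDiff (⇑M.σ) f a) ∧ vG1min M f a = 0

/-- `K` is σ-henselian. -/
def SigmaHenselian (M : ValuedDiffField K Γ k) : Prop :=
  ∀ (n : ℕ) (f : MvPolynomial (Fin (n + 1)) K), CoeffsInO M.toValuedField f →
    ∀ a : K, 0 ≤ M.v a → SigmaHenselAt M f a →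
      ∃ b : K, evalDiff (⇑M.σ) f b = 0 ∧ M.v (evalDiff (⇑M.σ) f a) ≤ M.v (a - b)

/-- `(G, a)` is in σ-hensel configuration. -/
def HenselConfig (M : ValuedDiffField K Γ k) {n : ℕ}
    (f : MvPolynomial (Fin (n + 1)) K) (a : K) : Prop :=
  (∃ i : Fin (n + 1), evalDiff (⇑M.σ) (taylorCoeff (Finsupp.single i 1) f) a ≠ 0) ∧
  (evalDiff (⇑M.σ) f a = 0 ∨ ∃ γ : Γ,
    M.v (evalDiff (⇑M.σ) f a) = vG1min M f a + (γ : WithTop Γ) ∧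
    ∀ j : Fin (n + 1) →₀ ℕ, 1 < degSum j →
      M.v (evalDiff (⇑M.σ) f a) <
        M.v (evalDiff (⇑M.σ) (taylorCoeff j f) a) + degSum j • (γ : WithTop Γ))

/-- The pc-sequence `a` is of σ-algebraic type over `K`. -/
def OfSigmaAlgebraicType (M : ValuedDiffField K Γ k) {I : Type*} [LinearOrder I]
    (a : I → K) : Prop :=
  ∃ (n : ℕ) (G : MvPolynomial (Fin (n + 1)) K) (b : I → K),
    IsPcSeq M.v b ∧ PcEquiv M.toValuedField a b ∧
    PseudoLim M.v (fun ρ => evalDiff (⇑M.σ) G (b ρ)) 0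

/-- The pc-sequence `a` is of σ-transcendental type over `K`. -/
def OfSigmaTranscendentalType (M : ValuedDiffField K Γ k) {I : Type*} [LinearOrder I]
    (a : I → K) : Prop :=
  ∀ (n : ℕ) (G : MvPolynomial (Fin (n + 1)) K) (b : I → K),
    IsPcSeq M.v b → PcEquiv M.toValuedField a b →
    ¬ PseudoLim M.v (fun ρ => evalDiff (⇑M.σ) G (b ρ)) 0

/-- `G` is a minimal σ-polynomial of the pc-sequence `a` over `K`. -/
def IsMinPolyOfPcSeq (M : ValuedDiffField K Γ k) {I : Type*} [LinearOrder I]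
    (a : I → K) {n : ℕ} (G : MvPolynomial (Fin (n + 1)) K) : Prop :=
  (∃ b : I → K, IsPcSeq M.v b ∧ PcEquiv M.toValuedField a b ∧
    PseudoLim M.v (fun ρ => evalDiff (⇑M.σ) G (b ρ)) 0) ∧
  ∀ (m : ℕ) (H : MvPolynomial (Fin (m + 1)) K),
    TripleLT (sigmaComplexity H) (sigmaComplexity G) →
    ∀ b : I → K, IsPcSeq M.v b → PcEquiv M.toValuedField a b →
      ¬ PseudoLim M.v (fun ρ => evalDiff (⇑M.σ) H (b ρ)) 0

end Axioms

/-- A bundled extension of a valued field (with prescribed value-group and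
residue sorts). -/
structure ValuedFieldExt {K : Type u} {Γ : Type v} {k : Type w}
    [Field K] [AddCommGroup Γ] [LinearOrder Γ] [IsOrderedAddMonoid Γ] [Field k]
    (M : ValuedField K Γ k) (Γ' : Type v) (k' : Type w)
    [AddCommGroup Γ'] [LinearOrder Γ'] [IsOrderedAddMonoid Γ'] [Field k'] where
  carrier : Type u
  [fieldInst : Field carrier]
  str : ValuedField carrier Γ' k'
  emb : ValEmbedding M str

attribute [instance] ValuedFieldExt.fieldInst

/-- A bundled extension of a valued difference field. -/
structure VDFExt {K : Type u} {Γ : Type v} {k : Type w}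
    [Field K] [AddCommGroup Γ] [LinearOrder Γ] [IsOrderedAddMonoid Γ] [Field k]
    (M : ValuedDiffField K Γ k) (Γ' : Type v) (k' : Type w)
    [AddCommGroup Γ'] [LinearOrder Γ'] [IsOrderedAddMonoid Γ'] [Field k'] where
  carrier : Type u
  [fieldInst : Field carrier]
  str : ValuedDiffField carrier Γ' k'
  emb : VDFEmbedding M str

attribute [instance] VDFExt.fieldInst

section Max

variable {K : Type u} {Γ : Type v} {k : Type w}
variable [Field K] [AddCommGroup Γ] [LinearOrder Γ] [IsOrderedAddMonoid Γ] [Field k]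

/-- Maximal valued field: no proper immediate valued field extension. -/
def MaximalValuedField (M : ValuedField K Γ k) : Prop :=
  ¬ ∃ Ext : ValuedFieldExt M Γ k,
      Ext.emb.IsImmediate ∧ ¬ Function.Surjective Ext.emb.toField

/-- Maximal valued difference field: no proper immediate extension. -/
def MaximalVDF (M : ValuedDiffField K Γ k) : Prop :=
  ¬ ∃ Ext : VDFExt M Γ k,
      Ext.emb.IsImmediate ∧ ¬ Function.Surjective Ext.emb.toField

/-- Every element of the extension is σ-algebraic over the ground field. -/
def SigmaAlgebraicExt {Γ' : Type v} {k' : Type w}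
    [AddCommGroup Γ'] [LinearOrder Γ'] [IsOrderedAddMonoid Γ'] [Field k']
    {M : ValuedDiffField K Γ k} (Ext : VDFExt M Γ' k') : Prop :=
  ∀ x : Ext.carrier, ∃ (n : ℕ) (f : MvPolynomial (Fin (n + 1)) K), f ≠ 0 ∧
    evalDiff (⇑Ext.str.σ) (MvPolynomial.map Ext.emb.toField f) x = 0

/-- σ-algebraically maximal: no proper immediate σ-algebraic extension. -/
def SigmaAlgMaximal (M : ValuedDiffField K Γ k) : Prop :=
  ¬ ∃ Ext : VDFExt M Γ k,
      Ext.emb.IsImmediate ∧ SigmaAlgebraicExt Ext ∧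
      ¬ Function.Surjective Ext.emb.toField

/-- Complete with a discrete valuation. -/
def CompleteDiscrete (M : ValuedField K Γ k) : Prop :=
  (∃ e : Γ ≃o ℤ, ∀ x y : Γ, e (x + y) = e x + e y) ∧
  ∀ u : ℕ → K,
    (∀ γ : Γ, ∃ N : ℕ, ∀ m n : ℕ, N ≤ m → N ≤ n → m ≠ n →
      (γ : WithTop Γ) < M.v (u m - u n)) →
    ∃ x : K, ∀ γ : Γ, ∃ N : ℕ, ∀ n : ℕ, N ≤ n → (γ : WithTop Γ) < M.v (x - u n)

end Max

/-- `g` is an isomorphism of difference fields `A → A'` over `E`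
(via `φ : E → F`, `φ' : E → F'`) sending `a` to `b`; `s, s'` are the difference
operators of the ambient fields. -/
def IsDiffIsoOver {E F F' : Type*} [Field E] [Field F] [Field F']
    (φ : E →+* F) (φ' : E →+* F') (s : F → F) (s' : F' → F')
    (A : Subfield F) (A' : Subfield F') (a : F) (b : F') (g : A →+* F') : Prop :=
  (Set.range fun x : A => g x) = (A' : Set F') ∧
  (∀ (e : E) (he : φ e ∈ A), g ⟨φ e, he⟩ = φ' e) ∧
  (∀ ha : a ∈ A, g ⟨a, ha⟩ = b) ∧
  (∀ (x : A) (hx : s (x : F) ∈ A), g ⟨s (x : F), hx⟩ = s' (g x))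

/-- As `IsDiffIsoOver`, and moreover valuation-preserving. -/
def IsValDiffIsoOver {E F F' : Type*} {Γ Γ' : Type*} [Field E] [Field F] [Field F']
    [AddCommGroup Γ] [LinearOrder Γ] [IsOrderedAddMonoid Γ] [AddCommGroup Γ'] [LinearOrder Γ'] [IsOrderedAddMonoid Γ']
    (v : F → WithTop Γ) (v' : F' → WithTop Γ')
    (φ : E →+* F) (φ' : E →+* F') (s : F → F) (s' : F' → F')
    (A : Subfield F) (A' : Subfield F') (a : F) (b : F') (g : A →+* F') : Prop :=
  IsDiffIsoOver φ φ' s s' A A' a b g ∧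
  ∀ x y : A, v (x : F) ≤ v (y : F) ↔ v' (g x) ≤ v' (g y)

/-- The `D`-transform substitution: `F(x₀,…,xₙ) ↦ F(W₀(y), …, Wₙ(y))` where
`W_j(y) = y₀^{p^j} + p y₁^{p^{j-1}} + ⋯ + p^j y_j`. -/
noncomputable def Dtransform (p : ℕ) {R : Type*} [CommSemiring R] {n : ℕ}
    (F : MvPolynomial (Fin (n + 1)) R) : MvPolynomial (Fin (n + 1)) R :=
  MvPolynomial.bind₁ (fun j : Fin (n + 1) =>
    ∑ i : Fin (n + 1), if (i : ℕ) ≤ (j : ℕ) then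
      MvPolynomial.C ((p : R) ^ (i : ℕ)) * MvPolynomial.X i ^ p ^ ((j : ℕ) - (i : ℕ))
    else 0) F

/-- The initial segment of the ordinals below `lam`, used as a well-ordered
index set. -/
abbrev OrdSeg (lam : Ordinal.{0}) : Type 1 := {o : Ordinal.{0} // o < lam}

/-!
Everything rests on Gauss's lemma. Let `x` be a family of integral elements of `K` whose residues
are algebraically independent over `k_E`. Dividing a polynomial `P` over `E` by a coefficient of
least valuation makes its reduction nonzero, and the reduction does not vanish at the residues of
`x`; so `v (P x)` is the least valuation of a coefficient. σ̄-transcendence of `α` gives this for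
`(σ^j a)_{0 ≤ j ≤ n}`, which is (i), and, after applying a power of `σ̄`, for the whole orbit
`(σ^m a)_{m ∈ ℤ}`. Hence `E⟨a⟩` is the fraction field of `E[X_m : m ∈ ℤ]`, every element being
`P(a) / Q(a)` with `v (Q a) = 0`; this gives (ii), and since the same holds for `b`, with the
same valuations on polynomials, `P(a) / Q(a) ↦ P(b) / Q(b)` is the isomorphism of (iii).
-/
section IterEquiv

variable {R S : Type*} [Mul R] [Add R] [Mul S] [Add S]

@[simp]
lemma iterEquiv_zero (s : R ≃+* R) (x : R) : iterEquiv s 0 x = x := rfl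

lemma iterEquiv_eq_zpow (s : R ≃+* R) : ∀ m : ℤ, iterEquiv s m = ⇑(s ^ m)
  | Int.ofNat n => (RingAut.coe_pow s n).symm
  | Int.negSucc n => by rw [zpow_negSucc, ← inv_pow, RingAut.coe_pow]; rfl

lemma iterEquiv_semiconj {f : R → S} {s : R ≃+* R} {t : S ≃+* S}
    (h : ∀ x, f (s x) = t (f x)) : ∀ (m : ℤ) (x : R), f (iterEquiv s m x) = iterEquiv t m (f x)
  | Int.ofNat n, x => Function.Semiconj.iterate_right h n x
  | Int.negSucc n, x =>
    Function.Semiconj.iterate_right (f := f) (ga := s.symm) (gb := t.symm)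
      (fun y => t.injective (by rw [t.apply_symm_apply, ← h, s.apply_symm_apply])) (n + 1) x

lemma iterEquiv_invariant {X : Type*} {f : R → X} {s : R ≃+* R} (h : ∀ x, f (s x) = f x) :
    ∀ (m : ℤ) (x : R), f (iterEquiv s m x) = f x
  | Int.ofNat n, x => by
    have := Function.Semiconj.iterate_right (f := f) (ga := s) (gb := id) h n x
    rwa [Function.iterate_id] at this
  | Int.negSucc n, x => by
    have := Function.Semiconj.iterate_right (f := f) (ga := s.symm) (gb := id)
      (fun y => by rw [← h, s.apply_symm_apply]; rfl) (n + 1) x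
    rwa [Function.iterate_id] at this

end IterEquiv

namespace ValuedField

variable {K Γ k : Type*}
variable [Field K] [AddCommGroup Γ] [LinearOrder Γ] [IsOrderedAddMonoid Γ] [Field k]
variable (M : ValuedField K Γ k)

lemma v_zero : M.v 0 = ⊤ := (M.v_top_iff 0).2 rfl

lemma v_ne_top {x : K} (hx : x ≠ 0) : M.v x ≠ ⊤ := fun h => hx ((M.v_top_iff x).1 h)

lemma v_one : M.v 1 = 0 := by
  have h : 0 + M.v 1 = M.v 1 + M.v 1 := by rw [zero_add, ← M.v_mul, one_mul]
  exact (WithTop.add_right_cancel (M.v_ne_top one_ne_zero) h).symm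

def toAddValuation : AddValuation K (WithTop Γ) :=
  AddValuation.of M.v M.v_zero M.v_one M.v_add M.v_mul

lemma v_neg (x : K) : M.v (-x) = M.v x := M.toAddValuation.map_neg x

lemma v_inv_mul_nonneg_iff {c : K} (hc : c ≠ 0) (x : K) : 0 ≤ M.v (c⁻¹ * x) ↔ M.v c ≤ M.v x := by
  have h : M.v (c⁻¹ * x) + M.v c = M.v x := by
    rw [← M.v_mul, mul_right_comm, inv_mul_cancel₀ hc, one_mul]
  rw [← h, ← WithTop.add_le_add_iff_right (M.v_ne_top hc), zero_add]

lemma v_div_le_div_iff {p q p' q' : K} (hq : q ≠ 0) (hq' : q' ≠ 0) :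
    M.v (p / q) ≤ M.v (p' / q') ↔ M.v (p * q') ≤ M.v (p' * q) := by
  have h : ∀ {p q : K}, q ≠ 0 → M.v p = M.v (p / q) + M.v q := fun {p q} hq => by
    rw [← M.v_mul, div_mul_cancel₀ _ hq]
  rw [M.v_mul, M.v_mul, h (p := p) hq, h (p := p') hq', add_assoc,
    add_right_comm (M.v (p' / q')), add_assoc,
    WithTop.add_le_add_iff_right (WithTop.add_ne_top.2 ⟨M.v_ne_top hq, M.v_ne_top hq'⟩)]

lemma π_zero : M.π 0 = 0 :=
  (M.π_eq_zero_iff 0 (by rw [M.v_zero]; exact le_top)).2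
    (by rw [M.v_zero]; exact WithTop.coe_lt_top 0)

lemma π_ne_zero_iff {x : K} (hx : 0 ≤ M.v x) : M.π x ≠ 0 ↔ M.v x = 0 := by
  rw [ne_eq, M.π_eq_zero_iff x hx, not_lt]
  exact ⟨fun h => le_antisymm h hx, le_of_eq⟩

lemma exists_π_eq (y : k) : ∃ x, 0 ≤ M.v x ∧ M.π x = y := by
  obtain ⟨x, rfl⟩ := M.π_surj y
  by_cases hx : 0 ≤ M.v x
  · exact ⟨x, hx, rfl⟩
  · exact ⟨0, by rw [M.v_zero]; exact le_top, by rw [M.π_zero, M.π_junk x hx]⟩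

def integers : Subring K where
  carrier := {x | 0 ≤ M.v x}
  zero_mem' := by simp only [Set.mem_ofPred_eq, M.v_zero, le_top]
  one_mem' := (M.v_one).ge
  add_mem' {x y} hx hy := le_trans (le_min hx hy) (M.v_add x y)
  mul_mem' {x y} hx hy := by simp only [Set.mem_ofPred_eq, M.v_mul]; exact add_nonneg hx hy
  neg_mem' {x} hx := by simpa only [Set.mem_ofPred_eq, M.v_neg] using hx

def residue : M.integers →+* k where
  toFun x := M.π x
  map_one' := M.π_one
  map_mul' x y := M.π_mul x y x.2 y.2
  map_zero' := M.π_zero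
  map_add' x y := M.π_add x y x.2 y.2

def residueSubfield (A : Subfield K) : Subfield k where
  carrier := {y | ∃ x ∈ A, 0 ≤ M.v x ∧ M.π x = y}
  zero_mem' := ⟨0, A.zero_mem, M.integers.zero_mem, M.π_zero⟩
  one_mem' := ⟨1, A.one_mem, M.integers.one_mem, M.π_one⟩
  add_mem' := by
    rintro _ _ ⟨x, hx, hvx, rfl⟩ ⟨y, hy, hvy, rfl⟩
    exact ⟨x + y, A.add_mem hx hy, M.integers.add_mem hvx hvy, M.π_add x y hvx hvy⟩
  mul_mem' := by
    rintro _ _ ⟨x, hx, hvx, rfl⟩ ⟨y, hy, hvy, rfl⟩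
    exact ⟨x * y, A.mul_mem hx hy, M.integers.mul_mem hvx hvy, M.π_mul x y hvx hvy⟩
  neg_mem' := by
    rintro _ ⟨x, hx, hvx, rfl⟩
    refine ⟨-x, A.neg_mem hx, M.integers.neg_mem hvx, ?_⟩
    rw [eq_neg_iff_add_eq_zero, ← M.π_add _ _ (M.integers.neg_mem hvx) hvx, neg_add_cancel,
      M.π_zero]
  inv_mem' := by
    rintro _ ⟨x, hx, hvx, rfl⟩
    by_cases h0 : M.π x = 0
    · exact ⟨0, A.zero_mem, M.integers.zero_mem, by rw [h0, inv_zero, M.π_zero]⟩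
    have hv : M.v x = 0 := (M.π_ne_zero_iff hvx).1 h0
    have hx0 : x ≠ 0 := by rintro rfl; exact WithTop.top_ne_zero (M.v_zero ▸ hv)
    have hvinv : 0 ≤ M.v x⁻¹ := by
      simpa [hv] using (M.v_inv_mul_nonneg_iff hx0 1).2 (by rw [hv, M.v_one])
    refine ⟨x⁻¹, A.inv_mem hx, hvinv, eq_inv_of_mul_eq_one_left ?_⟩
    rw [← M.π_mul _ _ hvinv hvx, inv_mul_cancel₀ hx0, M.π_one]

end ValuedField

namespace ValEmbedding

variable {K Γ k E ΓE kE : Type*}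
variable [Field K] [AddCommGroup Γ] [LinearOrder Γ] [IsOrderedAddMonoid Γ] [Field k]
variable [Field E] [AddCommGroup ΓE] [LinearOrder ΓE] [IsOrderedAddMonoid ΓE] [Field kE]
variable {MK : ValuedField K Γ k} {ME : ValuedField E ΓE kE} (i : ValEmbedding ME MK)

lemma v_le_iff (x y : E) : MK.v (i.toField x) ≤ MK.v (i.toField y) ↔ ME.v x ≤ ME.v y := by
  rw [i.comm_v, i.comm_v]
  exact WithTop.map_le_iff _ i.toGroup_mono.le_iff_le

lemma v_nonneg_iff (x : E) : 0 ≤ MK.v (i.toField x) ↔ 0 ≤ ME.v x := by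
  simpa only [map_one, MK.v_one, ME.v_one] using i.v_le_iff 1 x

lemma inf_v {ι : Type*} (s : Finset ι) (c : ι → E) :
    (s.inf fun d => MK.v (i.toField (c d))) =
      WithTop.map i.toGroup (s.inf fun d => ME.v (c d)) := by
  rw [Finset.apply_inf_eq_inf_comp_of_linearOrder _ i.toGroup_mono.monotone.withTop_map
    (WithTop.map_top _)]
  exact Finset.inf_congr rfl fun d _ => i.comm_v (c d)

def toIntegers : ME.integers →+* MK.integers :=
  i.toField.restrict _ _ fun x hx => (i.v_nonneg_iff x).2 hx

lemma residue_comp_toIntegers : MK.residue.comp i.toIntegers = i.toRes.comp ME.residue :=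
  RingHom.ext fun x => i.comm_π x x.2

variable {ι : Type*} {x : ι → K}

lemma exists_π_eval₂_eq (hx : ∀ j, 0 ≤ MK.v (x j)) (f : MvPolynomial ι E)
    (hf : ∀ d, 0 ≤ ME.v (f.coeff d)) :
    0 ≤ MK.v (f.eval₂ i.toField x) ∧ ∃ g : MvPolynomial ι kE,
      (∀ d, g.coeff d = ME.π (f.coeff d)) ∧
      MK.π (f.eval₂ i.toField x) = g.eval₂ i.toRes fun j => MK.π (x j) := by
  obtain ⟨f₀, rfl⟩ : f ∈ Set.range (MvPolynomial.map ME.integers.subtype) := by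
    refine MvPolynomial.mem_range_map_iff_coeffs_subset.2 fun c hc => ?_
    obtain ⟨d, -, rfl⟩ := MvPolynomial.mem_coeffs_iff.1 hc
    exact ⟨⟨_, hf d⟩, rfl⟩
  have hlift : (f₀.map ME.integers.subtype).eval₂ i.toField x =
      MK.integers.subtype (f₀.eval₂ i.toIntegers fun j => ⟨x j, hx j⟩) := by
    rw [MvPolynomial.eval₂_map, MvPolynomial.eval₂_comp_left]
    rfl
  refine ⟨by rw [hlift]; exact (MvPolynomial.eval₂ i.toIntegers _ f₀).2, f₀.map ME.residue,
    fun d => MvPolynomial.coeff_map _ _ _, ?_⟩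
  rw [hlift]
  change MK.residue _ = _
  rw [MvPolynomial.eval₂_comp_left, residue_comp_toIntegers, ← MvPolynomial.eval₂_map]
  rfl

variable (hx : ∀ j, 0 ≤ MK.v (x j))
  (hind : Function.Injective (MvPolynomial.eval₂Hom i.toRes fun j => MK.π (x j)))
include hx hind

lemma v_eval₂_eq_zero {f : MvPolynomial ι E} (hf : ∀ d, 0 ≤ ME.v (f.coeff d))
    {d₀ : ι →₀ ℕ} (hd₀ : ME.v (f.coeff d₀) = 0) : MK.v (f.eval₂ i.toField x) = 0 := by
  obtain ⟨hnn, g, hg, hπ⟩ := i.exists_π_eval₂_eq hx f hf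
  have hg0 : g ≠ 0 := fun h0 => by
    have := hg d₀
    rw [h0, MvPolynomial.coeff_zero] at this
    exact (ME.π_ne_zero_iff (hf d₀)).2 hd₀ this.symm
  refine (MK.π_ne_zero_iff hnn).1 ?_
  rw [hπ]
  exact fun h => hg0 (hind (by rw [map_zero]; exact h))

theorem v_eval₂ (f : MvPolynomial ι E) :
    MK.v (f.eval₂ i.toField x) = f.support.inf fun d => MK.v (i.toField (f.coeff d)) := by
  rcases eq_or_ne f 0 with rfl | hf
  · simp [MK.v_zero]
  obtain ⟨d₀, hd₀, hmin⟩ := Finset.exists_mem_eq_inf f.support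
    (MvPolynomial.support_nonempty.2 hf) fun d => MK.v (i.toField (f.coeff d))
  set c := f.coeff d₀
  have hc : c ≠ 0 := MvPolynomial.mem_support_iff.1 hd₀
  have hunit : MK.v ((MvPolynomial.C c⁻¹ * f).eval₂ i.toField x) = 0 := by
    refine i.v_eval₂_eq_zero hx hind (d₀ := d₀) (fun d => ?_) ?_
    · rw [MvPolynomial.coeff_C_mul, ME.v_inv_mul_nonneg_iff hc, ← i.v_le_iff]
      by_cases hd : d ∈ f.support
      · exact hmin ▸ Finset.inf_le hd
      · rw [MvPolynomial.notMem_support_iff.1 hd, map_zero, MK.v_zero]; exact le_top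
    · rw [MvPolynomial.coeff_C_mul, inv_mul_cancel₀ hc, ME.v_one]
  have hf' : f = MvPolynomial.C c * (MvPolynomial.C c⁻¹ * f) := by
    rw [← mul_assoc, ← MvPolynomial.C_mul, mul_inv_cancel₀ hc, MvPolynomial.C_1, one_mul]
  rw [hmin]
  conv_lhs => rw [hf']
  rw [MvPolynomial.eval₂_mul, MvPolynomial.eval₂_C, MK.v_mul, hunit, add_zero]

lemma exists_v_eval₂_eq {f : MvPolynomial ι E} (hf : f ≠ 0) :
    ∃ c ≠ 0, MK.v (f.eval₂ i.toField x) = MK.v (i.toField c) := by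
  obtain ⟨d, hd, hmin⟩ := Finset.exists_mem_eq_inf f.support
    (MvPolynomial.support_nonempty.2 hf) fun d => MK.v (i.toField (f.coeff d))
  exact ⟨f.coeff d, MvPolynomial.mem_support_iff.1 hd, by rw [i.v_eval₂ hx hind, hmin]⟩

lemma eval₂_ne_zero {f : MvPolynomial ι E} (hf : f ≠ 0) : f.eval₂ i.toField x ≠ 0 := by
  obtain ⟨c, hc, hv⟩ := i.exists_v_eval₂_eq hx hind hf
  exact fun h => MK.v_ne_top (i.toField.injective.ne_iff' (map_zero _) |>.2 hc)
    (by rw [← hv, h, MK.v_zero])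

lemma coeff_nonneg_of_v_eval₂_nonneg {f : MvPolynomial ι E}
    (hf : 0 ≤ MK.v (f.eval₂ i.toField x)) (d : ι →₀ ℕ) : 0 ≤ ME.v (f.coeff d) := by
  rw [← i.v_nonneg_iff]
  by_cases hd : d ∈ f.support
  · exact hf.trans ((i.v_eval₂ hx hind f).symm ▸ Finset.inf_le hd)
  · rw [MvPolynomial.notMem_support_iff.1 hd, map_zero, MK.v_zero]; exact le_top

end ValEmbedding

section Orbit

variable {E F : Type*} [Field E] [Field F]

noncomputable def orbitEval (s : F ≃+* F) (φ : E →+* F) (a : F) : MvPolynomial ℤ E →+* F :=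
  MvPolynomial.eval₂Hom φ fun m => iterEquiv s m a

lemma genDiffSubfield_eq_closure_range (s : F ≃+* F) (φ : E →+* F) (a : F) :
    genDiffSubfield s (Set.range φ) a = Subfield.closure (orbitEval s φ a).range := by
  unfold genDiffSubfield
  apply le_antisymm
  · refine Subfield.closure_le.2 ?_
    rintro _ (⟨e, rfl⟩ | ⟨m, rfl⟩)
    · exact Subfield.subset_closure ⟨MvPolynomial.C e, MvPolynomial.eval₂Hom_C _ _ _⟩
    · exact Subfield.subset_closure ⟨MvPolynomial.X m, MvPolynomial.eval₂Hom_X' _ _ _⟩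
  · refine Subfield.closure_le.2 ?_
    rintro _ ⟨P, rfl⟩
    exact MvPolynomial.eval₂_mem
      (s := Subfield.closure (Set.range φ ∪ Set.range fun m : ℤ => iterEquiv s m a))
      (fun d _ => Subfield.subset_closure (Or.inl ⟨_, rfl⟩))
      fun m => Subfield.subset_closure (Or.inr ⟨m, rfl⟩)

lemma orbitEval_mem_genDiffSubfield (s : F ≃+* F) (φ : E →+* F) (a : F)
    (P : MvPolynomial ℤ E) : orbitEval s φ a P ∈ genDiffSubfield s (Set.range φ) a := by
  rw [genDiffSubfield_eq_closure_range]
  exact Subfield.subset_closure ⟨P, rfl⟩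

lemma orbitEval_div_mem_genDiffSubfield (s : F ≃+* F) (φ : E →+* F) (a : F)
    (P Q : MvPolynomial ℤ E) :
    orbitEval s φ a P / orbitEval s φ a Q ∈ genDiffSubfield s (Set.range φ) a :=
  div_mem (orbitEval_mem_genDiffSubfield s φ a P) (orbitEval_mem_genDiffSubfield s φ a Q)

noncomputable def shiftPoly (t : E ≃+* E) : MvPolynomial ℤ E →+* MvPolynomial ℤ E :=
  MvPolynomial.eval₂Hom (MvPolynomial.C.comp t.toRingHom) fun m => MvPolynomial.X (m + 1)

lemma orbitEval_shiftPoly {s : F ≃+* F} {φ : E →+* F} {t : E ≃+* E}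
    (hφ : ∀ e, φ (t e) = s (φ e)) (a : F) (P : MvPolynomial ℤ E) :
    orbitEval s φ a (shiftPoly t P) = s (orbitEval s φ a P) := by
  refine RingHom.congr_fun (f := (orbitEval s φ a).comp (shiftPoly t))
    (g := (s : F →+* F).comp (orbitEval s φ a))
    (MvPolynomial.ringHom_ext (fun e => ?_) fun m => ?_) P
  · simp [orbitEval, shiftPoly, hφ]
  · simp only [orbitEval, shiftPoly, RingHom.coe_comp, Function.comp_apply,
      MvPolynomial.eval₂Hom_X', RingEquiv.coe_toRingHom, iterEquiv_eq_zpow]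
    rw [add_comm, zpow_one_add, RingAut.mul_apply]

theorem SigmaTranscendentalOver.orbitEval_injective {φ : E →+* F} {s : F ≃+* F}
    {t : E ≃+* E} (hφ : ∀ e, φ (t e) = s (φ e)) {α : F}
    (htr : SigmaTranscendentalOver φ s α) : Function.Injective (orbitEval s φ α) := by
  rw [injective_iff_map_eq_zero]
  intro g hg
  obtain ⟨B, hB⟩ : ∃ B : ℕ, ∀ m ∈ g.vars, m.natAbs ≤ B := ⟨_, fun m hm => Finset.le_sup hm⟩
  obtain ⟨h, rfl⟩ := g.exists_rename_eq_of_vars_subset_range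
    (fun j : Fin (2 * B + 1) => (j : ℤ) - B) (fun j j' hj => Fin.ext (by simpa using hj))
    (fun m hm => by
      have := hB m hm
      exact ⟨⟨(m + B).toNat, by omega⟩, by simp; omega⟩)
  -- applying `s ^ B` moves the variables `X (j - B)` to `X j`, `0 ≤ j ≤ 2 B`
  have key :
      evalDiff s (MvPolynomial.map φ (MvPolynomial.map (t ^ B : E ≃+* E).toRingHom h)) α =
        (s ^ B) (orbitEval s φ α
          (MvPolynomial.rename (fun j : Fin (2 * B + 1) => (j : ℤ) - B) h)) := by
    rw [evalDiff, MvPolynomial.eval_map, MvPolynomial.eval₂_map, orbitEval,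
      MvPolynomial.coe_eval₂Hom, MvPolynomial.eval₂_rename,
      show ∀ y, (s ^ B) y = ((s ^ B : F ≃+* F) : F →+* F) y from fun _ => rfl,
      MvPolynomial.eval₂_comp_left]
    congr 1
    · ext e
      simpa [RingAut.coe_pow] using (Function.Semiconj.iterate_right hφ B e)
    · ext j
      simp only [Function.comp_apply, RingEquiv.coe_toRingHom, iterEquiv_eq_zpow]
      rw [← RingAut.mul_apply, ← zpow_natCast, ← zpow_add, add_sub_cancel, zpow_natCast,
        RingAut.coe_pow]
  rw [hg, map_zero] at key
  have hh : MvPolynomial.map (t ^ B : E ≃+* E).toRingHom h = 0 := by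
    by_contra hne
    exact htr (2 * B) _ hne key
  rw [MvPolynomial.map_injective _ (RingEquiv.injective _) (hh.trans (map_zero _).symm),
    map_zero]

end Orbit

section FractionTransfer

variable {R F F' : Type*} [CommRing R] [IsDomain R] [Field F] [Field F']
variable {gA : R →+* F} {gB : R →+* F'}

lemma exists_eq_div_of_mem_closure_range (hA : Function.Injective gA) {x : F}
    (hx : x ∈ Subfield.closure (gA.range : Set F)) : ∃ p q, q ≠ 0 ∧ x = gA p / gA q := by
  rw [← IsFractionRing.lift_fieldRange (K := FractionRing R) hA] at hx
  obtain ⟨y, rfl⟩ := hx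
  obtain ⟨⟨p, q⟩, rfl⟩ := IsLocalization.mk'_surjective (nonZeroDivisors R) y
  exact ⟨p, q, nonZeroDivisors.coe_ne_zero q, IsFractionRing.lift_mk' hA p q⟩

noncomputable def fractionTransfer (hA : Function.Injective gA) (hB : Function.Injective gB)
    {A : Subfield F} (hAr : A = Subfield.closure (gA.range : Set F)) : A →+* F' :=
  (IsFractionRing.lift (K := FractionRing R) hB).comp
    ((IsFractionRing.lift (K := FractionRing R) hA).rangeRestrictFieldEquiv.trans
      (RingEquiv.subfieldCongr
        ((IsFractionRing.lift_fieldRange hA).trans hAr.symm))).symm.toRingHom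

lemma fractionTransfer_apply (hA : Function.Injective gA) (hB : Function.Injective gB)
    {A : Subfield F} (hAr : A = Subfield.closure (gA.range : Set F)) (y : A) {p q : R}
    (hq : q ≠ 0) (hy : (y : F) = gA p / gA q) :
    fractionTransfer hA hB hAr y = gB p / gB q := by
  set e := (IsFractionRing.lift (K := FractionRing R) hA).rangeRestrictFieldEquiv.trans
      (RingEquiv.subfieldCongr ((IsFractionRing.lift_fieldRange hA).trans hAr.symm))
  have he : e.symm y =
      IsLocalization.mk' (FractionRing R) p ⟨q, mem_nonZeroDivisors_of_ne_zero hq⟩ := by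
    apply (IsFractionRing.lift (K := FractionRing R) hA).injective
    rw [IsFractionRing.lift_mk', ← hy]
    exact congrArg Subtype.val (e.apply_symm_apply y)
  change IsFractionRing.lift hB (e.symm y) = _
  rw [he, IsFractionRing.lift_mk']

end FractionTransfer

namespace ValuedDiffField

variable {K Γ k : Type*}
variable [Field K] [AddCommGroup Γ] [LinearOrder Γ] [IsOrderedAddMonoid Γ] [Field k]
variable (M : ValuedDiffField K Γ k)

lemma v_iterEquiv (m : ℤ) (x : K) : M.v (iterEquiv M.σ m x) = M.v x :=
  iterEquiv_invariant M.v_σ m x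

lemma π_iterEquiv (m : ℤ) (x : K) : M.π (iterEquiv M.σ m x) = iterEquiv M.σr m (M.π x) :=
  iterEquiv_semiconj M.π_σ m x

end ValuedDiffField

section ResidueTranscendental

variable {K Γ k E ΓE kE : Type*}
variable [Field K] [AddCommGroup Γ] [LinearOrder Γ] [IsOrderedAddMonoid Γ] [Field k]
variable [Field E] [AddCommGroup ΓE] [LinearOrder ΓE] [IsOrderedAddMonoid ΓE] [Field kE]
variable {MK : ValuedDiffField K Γ k} {ME : ValuedDiffField E ΓE kE}

lemma VDFEmbedding.toRes_σr (i : VDFEmbedding ME MK) (κ : kE) :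
    i.toRes (ME.σr κ) = MK.σr (i.toRes κ) := by
  obtain ⟨e, he, rfl⟩ := ME.exists_π_eq κ
  rw [← ME.π_σ, ← i.comm_π _ (by rwa [ME.v_σ]), i.comm_σ, MK.π_σ, i.comm_π e he]

variable {i : VDFEmbedding ME MK} {a : K}

lemma orbit_nonneg (ha : 0 ≤ MK.v a) (m : ℤ) : 0 ≤ MK.v (iterEquiv MK.σ m a) :=
  (MK.v_iterEquiv m a).symm ▸ ha

lemma orbit_residue_injective (htr : SigmaTranscendentalOver i.toRes MK.σr (MK.π a)) :
    Function.Injective (MvPolynomial.eval₂Hom i.toRes fun m => MK.π (iterEquiv MK.σ m a)) := by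
  simp only [MK.π_iterEquiv]
  exact htr.orbitEval_injective i.toRes_σr

variable (ha : 0 ≤ MK.v a) (htr : SigmaTranscendentalOver i.toRes MK.σr (MK.π a))
include ha htr

theorem v_evalDiff (n : ℕ) (f : MvPolynomial (Fin (n + 1)) E) :
    MK.v (evalDiff MK.σ (MvPolynomial.map i.toField f) a) =
      f.support.inf fun d => MK.v (i.toField (f.coeff d)) := by
  rw [evalDiff, MvPolynomial.eval_map]
  refine i.v_eval₂ (x := fun j : Fin (n + 1) => (⇑MK.σ)^[j] a) (fun j => orbit_nonneg ha j)
    ((injective_iff_map_eq_zero _).2 fun g hg => ?_) f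
  by_contra hg0
  refine htr n g hg0 ?_
  rw [evalDiff, MvPolynomial.eval_map, ← hg]
  exact congrArg (MvPolynomial.eval₂ _ · g) (funext fun j => (MK.π_iterEquiv j a).symm)

lemma v_orbitEval (f : MvPolynomial ℤ E) :
    MK.v (orbitEval MK.σ i.toField a f) = f.support.inf fun d => MK.v (i.toField (f.coeff d)) :=
  i.v_eval₂ (orbit_nonneg ha) (orbit_residue_injective htr) f

lemma orbitEval_injective : Function.Injective (orbitEval MK.σ i.toField a) :=
  (injective_iff_map_eq_zero _).2 fun _ h => by_contra fun hf =>
    i.eval₂_ne_zero (orbit_nonneg ha) (orbit_residue_injective htr) hf h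

lemma exists_v_orbitEval_eq {P : MvPolynomial ℤ E} (hP : P ≠ 0) :
    ∃ c ≠ 0, MK.v (orbitEval MK.σ i.toField a P) = MK.v (i.toField c) :=
  i.exists_v_eval₂_eq (orbit_nonneg ha) (orbit_residue_injective htr) hP

lemma exists_eq_orbitEval_div (x : genDiffSubfield MK.σ (Set.range i.toField) a) :
    ∃ P Q, Q ≠ 0 ∧ (x : K) = orbitEval MK.σ i.toField a P / orbitEval MK.σ i.toField a Q :=
  exists_eq_div_of_mem_closure_range (orbitEval_injective ha htr)
    (genDiffSubfield_eq_closure_range MK.σ i.toField a ▸ x.2)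

lemma exists_mul_orbitEval_eq {x : K} (hx : x ∈ genDiffSubfield MK.σ (Set.range i.toField) a) :
    ∃ P Q, MK.v (orbitEval MK.σ i.toField a Q) = 0 ∧
      x * orbitEval MK.σ i.toField a Q = orbitEval MK.σ i.toField a P := by
  obtain ⟨P, Q, hQ, hxPQ⟩ := exists_eq_orbitEval_div ha htr ⟨x, hx⟩
  obtain ⟨c, hc, hvc⟩ := exists_v_orbitEval_eq ha htr hQ
  have hQ' := (map_ne_zero_iff _ (orbitEval_injective ha htr)).2 hQ
  refine ⟨MvPolynomial.C c⁻¹ * P, MvPolynomial.C c⁻¹ * Q, ?_, ?_⟩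
  · rw [map_mul, MK.v_mul, hvc, orbitEval, MvPolynomial.eval₂Hom_C, ← MK.v_mul, ← map_mul,
      inv_mul_cancel₀ hc, map_one, MK.v_one]
  · rw [map_mul, map_mul, show x = _ from hxPQ, div_mul_eq_mul_div, mul_div_assoc,
      mul_div_cancel_right₀ _ hQ', mul_comm]

theorem valueSet_genDiffSubfield :
    {γ : WithTop Γ | ∃ x ∈ genDiffSubfield MK.σ (Set.range i.toField) a, x ≠ 0 ∧ MK.v x = γ} =
      {γ : WithTop Γ | ∃ e : E, e ≠ 0 ∧ MK.v (i.toField e) = γ} := by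
  ext γ
  constructor
  · rintro ⟨x, hx, hx0, rfl⟩
    obtain ⟨P, Q, hQ, hPQ⟩ := exists_mul_orbitEval_eq ha htr hx
    have hP : P ≠ 0 := by
      rintro rfl
      rw [map_zero, mul_eq_zero] at hPQ
      refine hPQ.elim hx0 fun h => ?_
      rw [h, MK.v_zero] at hQ
      exact WithTop.top_ne_zero hQ
    obtain ⟨c, hc, hvc⟩ := exists_v_orbitEval_eq ha htr hP
    exact ⟨c, hc, by rw [← hvc, ← hPQ, MK.v_mul, hQ, add_zero]⟩
  · rintro ⟨e, he, rfl⟩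
    exact ⟨i.toField e, Subfield.subset_closure (Or.inl ⟨e, rfl⟩), (map_ne_zero _).2 he, rfl⟩

lemma π_orbitEval_mem {P : MvPolynomial ℤ E} (hP : 0 ≤ MK.v (orbitEval MK.σ i.toField a P)) :
    MK.π (orbitEval MK.σ i.toField a P) ∈ genDiffSubfield MK.σr (Set.range i.toRes) (MK.π a) := by
  obtain ⟨-, g, -, hg⟩ := i.exists_π_eval₂_eq (orbit_nonneg ha) P
    (i.coeff_nonneg_of_v_eval₂_nonneg (orbit_nonneg ha) (orbit_residue_injective htr) hP)
  simp only [MK.π_iterEquiv] at hg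
  rw [orbitEval, MvPolynomial.coe_eval₂Hom, hg]
  exact orbitEval_mem_genDiffSubfield MK.σr i.toRes (MK.π a) g

theorem residueSubfield_genDiffSubfield :
    MK.residueSubfield (genDiffSubfield MK.σ (Set.range i.toField) a) =
      genDiffSubfield MK.σr (Set.range i.toRes) (MK.π a) := by
  apply le_antisymm
  · rintro _ ⟨x, hx, hvx, rfl⟩
    obtain ⟨P, Q, hQ, hPQ⟩ := exists_mul_orbitEval_eq ha htr hx
    have hvP : 0 ≤ MK.v (orbitEval MK.σ i.toField a P) := by
      rwa [← hPQ, MK.v_mul, hQ, add_zero]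
    have hπ : MK.π x * MK.π (orbitEval MK.σ i.toField a Q) =
        MK.π (orbitEval MK.σ i.toField a P) := by
      rw [← MK.π_mul _ _ hvx hQ.ge, hPQ]
    rw [eq_div_of_mul_eq ((MK.π_ne_zero_iff hQ.ge).2 hQ) hπ]
    exact div_mem (π_orbitEval_mem ha htr hvP) (π_orbitEval_mem ha htr hQ.ge)
  · refine Subfield.closure_le.2 ?_
    rintro _ (⟨κ, rfl⟩ | ⟨m, rfl⟩)
    · obtain ⟨e, he, rfl⟩ := ME.exists_π_eq κ
      exact ⟨i.toField e, Subfield.subset_closure (Or.inl ⟨e, rfl⟩), (i.v_nonneg_iff e).2 he,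
        i.comm_π e he⟩
    · exact ⟨iterEquiv MK.σ m a, Subfield.subset_closure (Or.inr ⟨m, rfl⟩), orbit_nonneg ha m,
        MK.π_iterEquiv m a⟩

variable {K' Γ' k' : Type*}
variable [Field K'] [AddCommGroup Γ'] [LinearOrder Γ'] [IsOrderedAddMonoid Γ'] [Field k']
variable {MK' : ValuedDiffField K' Γ' k'} {i' : VDFEmbedding ME MK'} {b : K'}
variable (hb : 0 ≤ MK'.v b) (htr' : SigmaTranscendentalOver i'.toRes MK'.σr (MK'.π b))
include hb htr'

lemma v_orbitEval_le_iff (P Q : MvPolynomial ℤ E) :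
    MK.v (orbitEval MK.σ i.toField a P) ≤ MK.v (orbitEval MK.σ i.toField a Q) ↔
      MK'.v (orbitEval MK'.σ i'.toField b P) ≤ MK'.v (orbitEval MK'.σ i'.toField b Q) := by
  rw [v_orbitEval ha htr, v_orbitEval ha htr, v_orbitEval hb htr', v_orbitEval hb htr',
    i.inf_v, i.inf_v, i'.inf_v, i'.inf_v, WithTop.map_le_iff _ i.toGroup_mono.le_iff_le,
    WithTop.map_le_iff _ i'.toGroup_mono.le_iff_le]

noncomputable def orbitTransfer : genDiffSubfield MK.σ (Set.range i.toField) a →+* K' :=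
  fractionTransfer (orbitEval_injective ha htr) (orbitEval_injective hb htr')
    (genDiffSubfield_eq_closure_range MK.σ i.toField a)

lemma orbitTransfer_apply (x : genDiffSubfield MK.σ (Set.range i.toField) a)
    {P Q : MvPolynomial ℤ E} (hQ : Q ≠ 0)
    (hx : (x : K) = orbitEval MK.σ i.toField a P / orbitEval MK.σ i.toField a Q) :
    orbitTransfer ha htr hb htr' x =
      orbitEval MK'.σ i'.toField b P / orbitEval MK'.σ i'.toField b Q :=
  fractionTransfer_apply _ _ _ x hQ hx

lemma range_orbitTransfer :
    (Set.range fun x => orbitTransfer ha htr hb htr' x) =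
      (genDiffSubfield MK'.σ (Set.range i'.toField) b : Set K') := by
  ext z
  constructor
  · rintro ⟨x, rfl⟩
    obtain ⟨P, Q, hQ, hx⟩ := exists_eq_orbitEval_div ha htr x
    dsimp only
    rw [orbitTransfer_apply ha htr hb htr' x hQ hx]
    exact orbitEval_div_mem_genDiffSubfield _ _ _ P Q
  · intro hz
    obtain ⟨P, Q, hQ, rfl⟩ := exists_eq_orbitEval_div hb htr' ⟨z, hz⟩
    exact ⟨⟨_, orbitEval_div_mem_genDiffSubfield _ _ _ P Q⟩,
      orbitTransfer_apply ha htr hb htr' _ hQ rfl⟩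

lemma orbitTransfer_σ (x : genDiffSubfield MK.σ (Set.range i.toField) a)
    (hx : MK.σ x ∈ genDiffSubfield MK.σ (Set.range i.toField) a) :
    orbitTransfer ha htr hb htr' ⟨MK.σ x, hx⟩ = MK'.σ (orbitTransfer ha htr hb htr' x) := by
  obtain ⟨P, Q, hQ, hxPQ⟩ := exists_eq_orbitEval_div ha htr x
  have hσQ : shiftPoly ME.σ Q ≠ 0 := fun h0 => hQ <| orbitEval_injective ha htr <| by
    rw [map_zero, ← map_eq_zero_iff MK.σ MK.σ.injective, ← orbitEval_shiftPoly i.comm_σ, h0,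
      map_zero]
  rw [orbitTransfer_apply ha htr hb htr' x hQ hxPQ,
    orbitTransfer_apply ha htr hb htr' _ (P := shiftPoly ME.σ P) hσQ (by
      rw [orbitEval_shiftPoly i.comm_σ, orbitEval_shiftPoly i.comm_σ, ← map_div₀, ← hxPQ]),
    orbitEval_shiftPoly i'.comm_σ, orbitEval_shiftPoly i'.comm_σ, map_div₀]

lemma v_orbitTransfer_le_iff (x y : genDiffSubfield MK.σ (Set.range i.toField) a) :
    MK.v (x : K) ≤ MK.v (y : K) ↔
      MK'.v (orbitTransfer ha htr hb htr' x) ≤ MK'.v (orbitTransfer ha htr hb htr' y) := by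
  obtain ⟨P, Q, hQ, hx⟩ := exists_eq_orbitEval_div ha htr x
  obtain ⟨P', Q', hQ', hy⟩ := exists_eq_orbitEval_div ha htr y
  rw [orbitTransfer_apply ha htr hb htr' x hQ hx, orbitTransfer_apply ha htr hb htr' y hQ' hy,
    hx, hy, MK.v_div_le_div_iff ((map_ne_zero_iff _ (orbitEval_injective ha htr)).2 hQ)
      ((map_ne_zero_iff _ (orbitEval_injective ha htr)).2 hQ'),
    MK'.v_div_le_div_iff ((map_ne_zero_iff _ (orbitEval_injective hb htr')).2 hQ)
      ((map_ne_zero_iff _ (orbitEval_injective hb htr')).2 hQ'),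
    ← map_mul, ← map_mul, ← map_mul, ← map_mul]
  exact v_orbitEval_le_iff ha htr hb htr' _ _

theorem exists_isValDiffIsoOver :
    ∃ g : genDiffSubfield MK.σ (Set.range i.toField) a →+* K',
      IsValDiffIsoOver MK.v MK'.v i.toField i'.toField MK.σ MK'.σ
        (genDiffSubfield MK.σ (Set.range i.toField) a)
        (genDiffSubfield MK'.σ (Set.range i'.toField) b) a b g := by
  refine ⟨orbitTransfer ha htr hb htr', ⟨range_orbitTransfer ha htr hb htr', fun e _ => ?_,
    fun _ => ?_, orbitTransfer_σ ha htr hb htr'⟩, v_orbitTransfer_le_iff ha htr hb htr'⟩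
  · simpa [orbitEval] using orbitTransfer_apply ha htr hb htr' _ (P := MvPolynomial.C e)
      one_ne_zero (by simp [orbitEval])
  · simpa [orbitEval] using orbitTransfer_apply ha htr hb htr' _ (P := MvPolynomial.X 0)
      one_ne_zero (by simp [orbitEval])

end ResidueTranscendental

/-- Lemma 2.4 ("extrest"): residue-transcendental elements.
`E` is a common valued difference subfield of `K` and `K'` via the embeddings
`i`, `i'`; `a ∈ O_K` has residue `α = π a` σ̄-transcendental over `k_E`. -/
theorem stmt1 {K : Type u} {Γ : Type v} {k : Type w}
    {K' : Type u} {Γ' : Type v} {k' : Type w}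
    {E : Type u} {ΓE : Type v} {kE : Type w}
    [Field K] [AddCommGroup Γ] [LinearOrder Γ] [IsOrderedAddMonoid Γ] [Field k]
    [Field K'] [AddCommGroup Γ'] [LinearOrder Γ'] [IsOrderedAddMonoid Γ'] [Field k']
    [Field E] [AddCommGroup ΓE] [LinearOrder ΓE] [IsOrderedAddMonoid ΓE] [Field kE]
    (MK : ValuedDiffField K Γ k) (MK' : ValuedDiffField K' Γ' k')
    (ME : ValuedDiffField E ΓE kE)
    (i : VDFEmbedding ME MK) (i' : VDFEmbedding ME MK')
    (a : K) (ha : 0 ≤ MK.v a)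
    (htr : SigmaTranscendentalOver i.toRes (⇑MK.σr) (MK.π a)) :
    -- (i)  v (P a) = min over the coefficients of v
    (∀ (n : ℕ) (f : MvPolynomial (Fin (n + 1)) E),
      MK.v (evalDiff (⇑MK.σ) (MvPolynomial.map i.toField f) a) =
        f.support.inf fun d => MK.v (i.toField (f.coeff d))) ∧
    -- (ii) value group of E⟨a⟩ equals that of E …
    ({γ : WithTop Γ | ∃ x ∈ genDiffSubfield MK.σ (Set.range i.toField) a,
        x ≠ 0 ∧ MK.v x = γ} =
      {γ : WithTop Γ | ∃ e : E, e ≠ 0 ∧ MK.v (i.toField e) = γ}) ∧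
    -- … and the residue field of E⟨a⟩ is k_E⟨α⟩
    ({y : k | ∃ x ∈ genDiffSubfield MK.σ (Set.range i.toField) a,
        0 ≤ MK.v x ∧ MK.π x = y} =
      (genDiffSubfield MK.σr (Set.range i.toRes) (MK.π a) : Set k)) ∧
    -- (iii) isomorphism over E
    (∀ b : K', 0 ≤ MK'.v b →
      SigmaTranscendentalOver i'.toRes (⇑MK'.σr) (MK'.π b) →
      ∃ g : (genDiffSubfield MK.σ (Set.range i.toField) a) →+* K',
        IsValDiffIsoOver MK.v MK'.v i.toField i'.toField (⇑MK.σ) (⇑MK'.σ)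
          (genDiffSubfield MK.σ (Set.range i.toField) a)
          (genDiffSubfield MK'.σ (Set.range i'.toField) b) a b g) :=
  ⟨v_evalDiff ha htr, valueSet_genDiffSubfield ha htr,
    congrArg SetLike.coe (residueSubfield_genDiffSubfield ha htr),
    fun _ hb htr' => exists_isValDiffIsoOver ha htr hb htr'⟩

end VDFPaper
end
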